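/- arXiv:1607.04879 — 11 statements merged into one kernel-verified Lean document; each statement's English description precedes it below -/
import Mathlib

section
/- Let A be a nonnegative bounded linear operator on a Banach space X, and let u ∈ X lie in the closure of the range of A. Then the approximation error of Lavrentiev regularization with exact data tends to zero, i.e. ‖γ (A + γI)⁻¹ u‖ → 0 as γ → 0 from the right. -/
open Filter
open scoped Topology

/-!
The operators `γ (A + γI)⁻¹` are bounded by `M` uniformly in `γ > 0`, and on the range of `A` they
tend to zero pointwise, because `γ (A + γI)⁻¹ (A v) = γ (v - γ (A + γI)⁻¹ v)` is `γ` times a vector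
of norm at most `(1 + M) ‖v‖`. A uniformly bounded family of operators that tends to zero pointwise
on a set tends to zero pointwise on its closure.
-/

namespace ContinuousLinearMap

variable {𝕜 E F : Type*} [NontriviallyNormedField 𝕜] [SeminormedAddCommGroup E]
  [SeminormedAddCommGroup F] [NormedSpace 𝕜 E] [NormedSpace 𝕜 F]

theorem tendsto_apply_zero_of_mem_closure {ι : Type*} {l : Filter ι} {T : ι → E →L[𝕜] F}
    {C : ℝ} (hT : ∀ᶠ i in l, ‖T i‖ ≤ C) {S : Set E}
    (hS : ∀ v ∈ S, Tendsto (fun i => T i v) l (𝓝 0)) {u : E} (hu : u ∈ closure S) :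
    Tendsto (fun i => T i u) l (𝓝 0) := by
  rw [Metric.tendsto_nhds]
  intro ε hε
  have hC : 0 < |C| + 1 := by positivity
  obtain ⟨v, hvS, huv⟩ := Metric.mem_closure_iff.mp hu (ε / 2 / (|C| + 1)) (by positivity)
  filter_upwards [hT, Metric.tendsto_nhds.mp (hS v hvS) (ε / 2) (half_pos hε)] with i hTi hvi
  rw [dist_eq_norm] at huv
  rw [dist_zero_right] at hvi ⊢
  have hTuv : ‖T i (u - v)‖ < ε / 2 :=
    calc ‖T i (u - v)‖ ≤ (|C| + 1) * ‖u - v‖ :=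
          (T i).le_of_opNorm_le (hTi.trans (by linarith [le_abs_self C])) _
      _ < (|C| + 1) * (ε / 2 / (|C| + 1)) := by gcongr
      _ = ε / 2 := by field_simp
  calc ‖T i u‖ = ‖T i (u - v) + T i v‖ := by rw [← map_add, sub_add_cancel]
    _ ≤ ‖T i (u - v)‖ + ‖T i v‖ := norm_add_le _ _
    _ < ε / 2 + ε / 2 := add_lt_add hTuv hvi
    _ = ε := add_halves ε

theorem apply_apply_eq_sub_smul_of_comp_eq_one {A R : E →L[𝕜] E} {γ : 𝕜}
    (hR : R.comp (A + γ • 1) = 1) (v : E) :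
    R (A v) = v - γ • R v := by
  rw [eq_sub_iff_add_eq]
  simpa using congr($hR v)

theorem norm_smul_le_of_norm_le_div [NormedSpace ℝ E] [NormedSpace ℝ F] {R : E →L[ℝ] F}
    {γ M : ℝ} (hγ : 0 < γ) (hR : ‖R‖ ≤ M / γ) :
    ‖γ • R‖ ≤ M := by
  rw [norm_smul, Real.norm_of_nonneg hγ.le]
  calc γ * ‖R‖ ≤ γ * (M / γ) := by gcongr
    _ = M := mul_div_cancel₀ M hγ.ne'

theorem tendsto_smul_apply_map_of_comp_eq_one [NormedSpace ℝ E] {A : E →L[ℝ] E}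
    {R : ℝ → E →L[ℝ] E} {M : ℝ} (hR : ∀ γ : ℝ, 0 < γ → (R γ).comp (A + γ • 1) = 1)
    (hbound : ∀ᶠ γ in 𝓝[>] (0 : ℝ), ‖γ • R γ‖ ≤ M) (v : E) :
    Tendsto (fun γ => (γ • R γ) (A v)) (𝓝[>] (0 : ℝ)) (𝓝 0) := by
  have hv : ∀ᶠ γ in 𝓝[>] (0 : ℝ), γ • (v - (γ • R γ) v) = (γ • R γ) (A v) :=
    eventually_mem_nhdsWithin.mono fun γ hγ => by
      rw [smul_apply, smul_apply, apply_apply_eq_sub_smul_of_comp_eq_one (hR γ hγ)]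
  refine (Tendsto.zero_smul_isBoundedUnder_le (tendsto_nhdsWithin_of_tendsto_nhds tendsto_id)
    (isBoundedUnder_of_eventually_le (a := ‖v‖ + M * ‖v‖) ?_)).congr' hv
  filter_upwards [hbound] with γ hγ
  calc ‖v - (γ • R γ) v‖ ≤ ‖v‖ + ‖(γ • R γ) v‖ := norm_sub_le _ _
    _ ≤ ‖v‖ + M * ‖v‖ := by gcongr; exact le_of_opNorm_le _ hγ v

end ContinuousLinearMap

open ContinuousLinearMap in
theorem lavrentiev_exact_data_convergence_general
    {X : Type*} [NormedAddCommGroup X] [NormedSpace ℝ X]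
    (A : X →L[ℝ] X) (M : ℝ) (R : ℝ → X →L[ℝ] X)
    (hinv : ∀ γ : ℝ, 0 < γ →
      (A + γ • (1 : X →L[ℝ] X)).comp (R γ) = 1 ∧
      (R γ).comp (A + γ • (1 : X →L[ℝ] X)) = 1)
    (hnorm : ∀ γ : ℝ, 0 < γ → ‖R γ‖ ≤ M / γ)
    (u : X) (hu : u ∈ closure (Set.range A)) :
    Tendsto (fun γ : ℝ => ‖γ • R γ u‖) (𝓝[>] (0 : ℝ)) (𝓝 0) := by
  have hbound : ∀ᶠ γ in 𝓝[>] (0 : ℝ), ‖γ • R γ‖ ≤ M :=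
    eventually_mem_nhdsWithin.mono fun γ hγ => norm_smul_le_of_norm_le_div hγ (hnorm γ hγ)
  have hrange : ∀ w ∈ Set.range A, Tendsto (fun γ => (γ • R γ) w) (𝓝[>] (0 : ℝ)) (𝓝 0) :=
    Set.forall_mem_range.2 <|
      tendsto_smul_apply_map_of_comp_eq_one (fun γ hγ => (hinv γ hγ).2) hbound
  exact tendsto_zero_iff_norm_tendsto_zero.mp (tendsto_apply_zero_of_mem_closure hbound hrange hu)

/-- Converse/direct theory for Lavrentiev regularization (Plato).
STATEMENT 0: if `A` is a nonnegative bounded linear operator on a Banach space `X`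
(with resolvent family `R γ = (A + γ I)⁻¹` satisfying `‖R γ‖ ≤ M / γ`), and
`u` lies in the closure of the range of `A`, then `‖γ (A + γ I)⁻¹ u‖ → 0` as `γ → 0⁺`. -/
theorem lavrentiev_exact_data_convergence
    {X : Type*} [NormedAddCommGroup X] [NormedSpace ℝ X] [CompleteSpace X]
    (A : X →L[ℝ] X) (M : ℝ) (hM : 1 ≤ M) (R : ℝ → X →L[ℝ] X)
    (hinv : ∀ γ : ℝ, 0 < γ →
      (A + γ • (1 : X →L[ℝ] X)).comp (R γ) = 1 ∧
      (R γ).comp (A + γ • (1 : X →L[ℝ] X)) = 1)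
    (hnorm : ∀ γ : ℝ, 0 < γ → ‖R γ‖ ≤ M / γ)
    (u : X) (hu : u ∈ closure (Set.range A)) :
    Tendsto (fun γ : ℝ => ‖γ • R γ u‖) (𝓝[>] (0 : ℝ)) (𝓝 0) :=
  lavrentiev_exact_data_convergence_general A M R hinv hnorm u hu
end

section
/- Let A be a nonnegative bounded linear operator on a reflexive Banach space X, and let u ∈ X. If γ (A + γI)⁻¹ u → 0 as γ → 0 from the right, then u belongs to the closure of the range of A. -/
open Filter
open scoped Topology

section

variable {𝕜 X : Type*} [CommRing 𝕜] [TopologicalSpace X] [AddCommGroup X] [IsTopologicalAddGroup X]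
  [Module 𝕜 X] [ContinuousConstSMul 𝕜 X]

theorem ContinuousLinearMap.apply_apply_eq_sub_smul_of_add_smul_one_comp_eq_one
    {A R : X →L[𝕜] X} {γ : 𝕜} (h : (A + γ • (1 : X →L[𝕜] X)).comp R = 1) (u : X) :
    A (R u) = u - γ • R u := by
  have hu := congrArg (fun T : X →L[𝕜] X => T u) h
  simp only [ContinuousLinearMap.comp_apply, add_apply, smul_apply, one_apply_eq_self] at hu
  exact eq_sub_of_add_eq hu

theorem mem_closure_range_of_tendsto_smul_resolvent {l : Filter 𝕜} [l.NeBot]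
    {A : X →L[𝕜] X} {R : 𝕜 → X →L[𝕜] X}
    (hinv : ∀ᶠ γ in l, (A + γ • (1 : X →L[𝕜] X)).comp (R γ) = 1) {u : X}
    (hconv : Tendsto (fun γ => γ • R γ u) l (𝓝 0)) :
    u ∈ closure (Set.range A) := by
  have hlim : Tendsto (fun γ => A (R γ u)) l (𝓝 u) := by
    have hsub : Tendsto (fun γ => u - γ • R γ u) l (𝓝 (u - 0)) := tendsto_const_nhds.sub hconv
    rw [sub_zero] at hsub
    refine hsub.congr' ?_
    filter_upwards [hinv] with γ hγ
    exact (ContinuousLinearMap.apply_apply_eq_sub_smul_of_add_smul_one_comp_eq_one hγ u).symm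
  exact mem_closure_of_tendsto hlim (Eventually.of_forall fun γ => Set.mem_range_self _)

end

theorem lavrentiev_converse_exact_data_closure_general
    {X : Type*} [NormedAddCommGroup X] [NormedSpace ℝ X]
    (A : X →L[ℝ] X) (R : ℝ → X →L[ℝ] X)
    (hinv : ∀ γ : ℝ, 0 < γ →
      (A + γ • (1 : X →L[ℝ] X)).comp (R γ) = 1 ∧
      (R γ).comp (A + γ • (1 : X →L[ℝ] X)) = 1)
    (u : X)
    (hconv : Tendsto (fun γ : ℝ => γ • R γ u) (𝓝[>] (0 : ℝ)) (𝓝 0)) :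
    u ∈ closure (Set.range A) :=
  mem_closure_range_of_tendsto_smul_resolvent (l := 𝓝[>] 0)
    (eventually_nhdsWithin_of_forall fun γ hγ => (hinv γ hγ).1) hconv

/-- converse result for exact data. If `A` is a nonnegative bounded linear
operator on a reflexive Banach space `X` and `γ (A + γ I)⁻¹ u → 0` as `γ → 0⁺`, then
`u` belongs to the closure of the range of `A`. -/
theorem lavrentiev_converse_exact_data_closure
    {X : Type*} [NormedAddCommGroup X] [NormedSpace ℝ X] [CompleteSpace X]
    (hrefl : Function.Surjective (NormedSpace.inclusionInDoubleDual ℝ X))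
    (A : X →L[ℝ] X) (M : ℝ) (hM : 1 ≤ M) (R : ℝ → X →L[ℝ] X)
    (hinv : ∀ γ : ℝ, 0 < γ →
      (A + γ • (1 : X →L[ℝ] X)).comp (R γ) = 1 ∧
      (R γ).comp (A + γ • (1 : X →L[ℝ] X)) = 1)
    (hnorm : ∀ γ : ℝ, 0 < γ → ‖R γ‖ ≤ M / γ)
    (u : X)
    (hconv : Tendsto (fun γ : ℝ => γ • R γ u) (𝓝[>] (0 : ℝ)) (𝓝 0)) :
    u ∈ closure (Set.range A) :=
  lavrentiev_converse_exact_data_closure_general A R hinv u hconv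
end

section
/- Let A be a nonnegative bounded linear operator on a reflexive Banach space X, and let u ∈ X. If ‖γ (A + γI)⁻¹ u‖ = O(γ) as γ → 0 from the right, then u belongs to the range of A. -/
/-!
From `A (R γ u) = u - γ R γ u` and the rate hypothesis, the family `R γ u` stays bounded as
`γ → 0⁺` while `A (R γ u) → u`. In a reflexive space bounded sets are weakly relatively compact
(Banach–Alaoglu in the bidual), so `R γ u` has a weak cluster point `v`; `A` is weakly continuous
and the weak topology is Hausdorff, hence `A v = u`.
-/

open Filter Asymptotics Bornology
open scoped Topology

theorem ContinuousLinearMap.apply_apply_eq_sub_smul_of_add_smul_one_comp_eq_one_s3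
    {R M : Type*} [CommRing R] [AddCommGroup M] [Module R M] [TopologicalSpace M]
    [IsTopologicalAddGroup M] [ContinuousConstSMul R M]
    {A S : M →L[R] M} {c : R} (h : (A + c • (1 : M →L[R] M)).comp S = 1) (u : M) :
    A (S u) = u - c • S u := by
  have hu := congrArg (· u) h
  simp only [comp_apply, add_apply, smul_apply] at hu
  exact eq_sub_of_add_eq hu

theorem Asymptotics.isBigO_one_of_smul_isBigO
    {α 𝕜 E : Type*} [NormedField 𝕜] [NormedAddCommGroup E] [NormedSpace 𝕜 E]
    {l : Filter α} {c : α → 𝕜} {f : α → E} (hc : ∀ᶠ a in l, c a ≠ 0)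
    (h : (fun a => c a • f a) =O[l] c) : f =O[l] (fun _ => (1 : 𝕜)) := by
  refine ((isBigO_refl (fun a => (c a)⁻¹) l).smul h).congr' ?_ ?_ <;>
    filter_upwards [hc] with a ha
  · exact inv_smul_smul₀ ha (f a)
  · exact inv_mul_cancel₀ ha

section Reflexive

open NormedSpace

variable {𝕜 X : Type*} [RCLike 𝕜] [NormedAddCommGroup X] [NormedSpace 𝕜 X]

theorem isCompact_closure_toWeakSpace_of_surjective_inclusionInDoubleDual
    (hrefl : Function.Surjective (inclusionInDoubleDual 𝕜 X)) {S : Set X} (hS : IsBounded S) :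
    IsCompact (closure (toWeakSpace 𝕜 X '' S)) := by
  refine isCompact_closure_of_isBounded 𝕜 X _
    (by rwa [(toWeakSpace 𝕜 X).injective.preimage_image]) fun φ _ => ?_
  obtain ⟨x, hx⟩ := hrefl (WeakDual.toStrongDual φ)
  exact ⟨toWeakSpace 𝕜 X x, DFunLike.ext _ _ fun f => congrArg (· f) hx⟩

theorem exists_mapClusterPt_toWeakSpace_of_isBoundedUnder {α : Type*}
    (hrefl : Function.Surjective (inclusionInDoubleDual 𝕜 X))
    {l : Filter α} [l.NeBot] {x : α → X} (hx : IsBoundedUnder (· ≤ ·) l (‖x ·‖)) :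
    ∃ v : X, MapClusterPt (toWeakSpace 𝕜 X v) l (toWeakSpace 𝕜 X ∘ x) := by
  obtain ⟨c, hc⟩ := hx
  set K := closure (toWeakSpace 𝕜 X '' Metric.closedBall 0 c)
  have hK : IsCompact K := isCompact_closure_toWeakSpace_of_surjective_inclusionInDoubleDual
    hrefl Metric.isBounded_closedBall
  have hxK : map (toWeakSpace 𝕜 X ∘ x) l ≤ 𝓟 K := by
    rw [le_principal_iff, mem_map]
    filter_upwards [hc] with a ha
    exact subset_closure ⟨x a, by simpa using ha, rfl⟩
  obtain ⟨w, -, hw⟩ := hK.exists_clusterPt hxK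
  exact ⟨(toWeakSpace 𝕜 X).symm w, by simpa [MapClusterPt] using hw⟩

theorem mem_range_of_isBoundedUnder_of_tendsto_apply {α Y : Type*}
    [NormedAddCommGroup Y] [NormedSpace 𝕜 Y]
    (hrefl : Function.Surjective (inclusionInDoubleDual 𝕜 X)) (A : X →L[𝕜] Y)
    {l : Filter α} [l.NeBot] {x : α → X} (hx : IsBoundedUnder (· ≤ ·) l (‖x ·‖)) {y : Y}
    (hAx : Tendsto (A ∘ x) l (𝓝 y)) : y ∈ Set.range A := by
  obtain ⟨v, hv⟩ := exists_mapClusterPt_toWeakSpace_of_isBoundedUnder hrefl hx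
  have hAv : MapClusterPt (toWeakSpace 𝕜 Y (A v)) l (toWeakSpace 𝕜 Y ∘ A ∘ x) :=
    hv.continuousAt_comp (f := WeakSpace.map A) (WeakSpace.map A).continuous.continuousAt
  have hlim : Tendsto (toWeakSpace 𝕜 Y ∘ A ∘ x) l (𝓝 (toWeakSpace 𝕜 Y y)) :=
    ((toWeakSpaceCLM 𝕜 Y).continuous.tendsto y).comp hAx
  exact ⟨v, (toWeakSpace 𝕜 Y).injective (eq_of_nhds_neBot (ClusterPt.mono hAv hlim))⟩

end Reflexive

theorem lavrentiev_converse_exact_data_range_general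
    {X : Type*} [NormedAddCommGroup X] [NormedSpace ℝ X]
    (hrefl : Function.Surjective (NormedSpace.inclusionInDoubleDual ℝ X))
    (A : X →L[ℝ] X) (R : ℝ → X →L[ℝ] X)
    (hinv : ∀ γ : ℝ, 0 < γ →
      (A + γ • (1 : X →L[ℝ] X)).comp (R γ) = 1 ∧
      (R γ).comp (A + γ • (1 : X →L[ℝ] X)) = 1)
    (u : X)
    (hrate : (fun γ : ℝ => γ • R γ u) =O[𝓝[>] (0 : ℝ)] (fun γ : ℝ => γ)) :
    u ∈ Set.range A := by
  have hbdd : IsBoundedUnder (· ≤ ·) (𝓝[>] 0) (‖R · u‖) :=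
    (isBigO_one_iff ℝ).mp <| isBigO_one_of_smul_isBigO
      (eventually_mem_nhdsWithin.mono fun _ hγ => ne_of_gt hγ) hrate
  refine mem_range_of_isBoundedUnder_of_tendsto_apply hrefl A hbdd ?_
  have hsmul : Tendsto (fun γ : ℝ => γ • R γ u) (𝓝[>] 0) (𝓝 0) :=
    hrate.trans_tendsto (tendsto_nhdsWithin_of_tendsto_nhds tendsto_id)
  have hsub : Tendsto (fun γ : ℝ => u - γ • R γ u) (𝓝[>] 0) (𝓝 u) := by
    simpa using tendsto_const_nhds.sub hsmul
  refine hsub.congr' ?_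
  filter_upwards [self_mem_nhdsWithin] with γ hγ
  exact (ContinuousLinearMap.apply_apply_eq_sub_smul_of_add_smul_one_comp_eq_one_s3
    (hinv γ hγ).1 u).symm

/-- converse result for exact data. If `A` is a nonnegative bounded linear
operator on a reflexive Banach space `X` and `‖γ (A + γ I)⁻¹ u‖ = O(γ)` as `γ → 0⁺`,
then `u ∈ R(A)`. -/
theorem lavrentiev_converse_exact_data_range
    {X : Type*} [NormedAddCommGroup X] [NormedSpace ℝ X] [CompleteSpace X]
    (hrefl : Function.Surjective (NormedSpace.inclusionInDoubleDual ℝ X))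
    (A : X →L[ℝ] X) (M : ℝ) (hM : 1 ≤ M) (R : ℝ → X →L[ℝ] X)
    (hinv : ∀ γ : ℝ, 0 < γ →
      (A + γ • (1 : X →L[ℝ] X)).comp (R γ) = 1 ∧
      (R γ).comp (A + γ • (1 : X →L[ℝ] X)) = 1)
    (hnorm : ∀ γ : ℝ, 0 < γ → ‖R γ‖ ≤ M / γ)
    (u : X)
    (hrate : (fun γ : ℝ => γ • R γ u) =O[𝓝[>] (0 : ℝ)] (fun γ : ℝ => γ)) :
    u ∈ Set.range A :=
  lavrentiev_converse_exact_data_range_general hrefl A R hinv u hrate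
end

section
/- Saturation for exact data: let A be a nonnegative bounded linear operator on a reflexive Banach space X, and let u ∈ X. If ‖γ (A + γI)⁻¹ u‖ = o(γ) as γ → 0 from the right, then u = 0. -/
/-!
Applying `A + γ I` to `R γ u` gives `u = A (R γ u) + γ R γ u`. The rate `γ R γ u = o(γ)` says
exactly that `R γ u → 0`, so the right-hand side tends to `0` as `γ → 0⁺`, and hence `u = 0`.
-/

open Filter Asymptotics
open scoped Topology

theorem ContinuousLinearMap.add_smul_apply_eq_of_comp_eq_one
    {𝕜 E : Type*} [NormedField 𝕜] [SeminormedAddCommGroup E] [NormedSpace 𝕜 E]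
    {A B : E →L[𝕜] E} {γ : 𝕜} (h : (A + γ • (1 : E →L[𝕜] E)).comp B = 1) (u : E) :
    A (B u) + γ • B u = u := by
  simpa using congr($h u)

theorem tendsto_nhds_zero_of_smul_isLittleO_id
    {𝕜 E : Type*} [NormedField 𝕜] [SeminormedAddCommGroup E] [NormedSpace 𝕜 E]
    {l : Filter 𝕜} {f : 𝕜 → E} (hl : ∀ᶠ γ in l, γ ≠ 0)
    (h : (fun γ => γ • f γ) =o[l] fun γ => γ) : Tendsto f l (𝓝 0) := by
  -- Multiply by `γ⁻¹ = O(γ⁻¹)`: `f γ = γ⁻¹ • (γ • f γ) = o(γ⁻¹ * γ) = o(1)`.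
  have hinv : (fun γ : 𝕜 => γ⁻¹) =O[l] fun γ => γ⁻¹ := isBigO_refl _ _
  refine isLittleO_one_iff (F := 𝕜) |>.mp ((hinv.smul_isLittleO h).congr' ?_ ?_)
  · filter_upwards [hl] with γ hγ using inv_smul_smul₀ hγ (f γ)
  · filter_upwards [hl] with γ hγ using inv_mul_cancel₀ hγ

theorem eq_zero_of_add_smul_apply_eq
    {𝕜 E : Type*} [NormedField 𝕜] [NormedAddCommGroup E] [NormedSpace 𝕜 E]
    {l : Filter 𝕜} [l.NeBot] (A : E →L[𝕜] E) {v : 𝕜 → E} {u : E}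
    (heq : ∀ᶠ γ in l, A (v γ) + γ • v γ = u) (hv : Tendsto v l (𝓝 0))
    (hγ : Tendsto (fun γ => γ) l (𝓝 0)) : u = 0 := by
  have hlim : Tendsto (fun γ => A (v γ) + γ • v γ) l (𝓝 0) := by
    simpa using ((A.continuous.tendsto 0).comp hv).add (hγ.smul hv)
  exact tendsto_nhds_unique tendsto_const_nhds (hlim.congr' heq)

theorem lavrentiev_saturation_exact_data_general
    {X : Type*} [NormedAddCommGroup X] [NormedSpace ℝ X]
    (A : X →L[ℝ] X) (R : ℝ → X →L[ℝ] X)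
    (hinv : ∀ γ : ℝ, 0 < γ →
      (A + γ • (1 : X →L[ℝ] X)).comp (R γ) = 1 ∧
      (R γ).comp (A + γ • (1 : X →L[ℝ] X)) = 1)
    (u : X)
    (hrate : (fun γ : ℝ => γ • R γ u) =o[𝓝[>] (0 : ℝ)] (fun γ : ℝ => γ)) :
    u = 0 := by
  have hpos : ∀ᶠ γ in 𝓝[>] (0 : ℝ), 0 < γ := self_mem_nhdsWithin
  have hresolvent : ∀ᶠ γ in 𝓝[>] (0 : ℝ), A (R γ u) + γ • R γ u = u := by
    filter_upwards [hpos] with γ hγ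
    exact ContinuousLinearMap.add_smul_apply_eq_of_comp_eq_one (hinv γ hγ).1 u
  have hRu : Tendsto (fun γ => R γ u) (𝓝[>] (0 : ℝ)) (𝓝 0) :=
    tendsto_nhds_zero_of_smul_isLittleO_id (hpos.mono fun _ => ne_of_gt) hrate
  exact eq_zero_of_add_smul_apply_eq A hresolvent hRu (tendsto_id.mono_left nhdsWithin_le_nhds)

/-- saturation for exact data. If `A` is a nonnegative bounded linear
operator on a reflexive Banach space `X` and `‖γ (A + γ I)⁻¹ u‖ = o(γ)` as `γ → 0⁺`,
then `u = 0`. -/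
theorem lavrentiev_saturation_exact_data
    {X : Type*} [NormedAddCommGroup X] [NormedSpace ℝ X] [CompleteSpace X]
    (hrefl : Function.Surjective (NormedSpace.inclusionInDoubleDual ℝ X))
    (A : X →L[ℝ] X) (M : ℝ) (hM : 1 ≤ M) (R : ℝ → X →L[ℝ] X)
    (hinv : ∀ γ : ℝ, 0 < γ →
      (A + γ • (1 : X →L[ℝ] X)).comp (R γ) = 1 ∧
      (R γ).comp (A + γ • (1 : X →L[ℝ] X)) = 1)
    (hnorm : ∀ γ : ℝ, 0 < γ → ‖R γ‖ ≤ M / γ)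
    (u : X)
    (hrate : (fun γ : ℝ => γ • R γ u) =o[𝓝[>] (0 : ℝ)] (fun γ : ℝ => γ)) :
    u = 0 :=
  lavrentiev_saturation_exact_data_general A R hinv u hrate
end

section
/- Let A be a nonnegative bounded linear operator on a reflexive Banach space X, and let u ∈ X. Suppose there is a sequence (γₙ) of positive real numbers with γₙ → 0 such that ‖γₙ (A + γₙI)⁻¹ u‖ = o(γₙ) as n → ∞. Then u = 0. -/
/-!
Put `wₙ = R γₙ u`, so that `A wₙ + γₙ wₙ = u`. The hypothesis `γₙ wₙ = o(γₙ)` says exactly that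
`wₙ → 0`, hence `A wₙ → 0` by continuity, while `γₙ wₙ → 0` because `γₙ → 0`. So the constant
sequence `u` tends to `0`.
-/

open Filter Asymptotics
open scoped Topology

theorem Asymptotics.IsLittleO.tendsto_zero_of_smul {α 𝕜 E : Type*} [NormedField 𝕜]
    [NormedAddCommGroup E] [NormedSpace 𝕜 E] {l : Filter α} {c : α → 𝕜} {w : α → E}
    (hc : ∀ᶠ x in l, c x ≠ 0) (h : (fun x => c x • w x) =o[l] c) :
    Tendsto w l (𝓝 0) := by
  rw [← isLittleO_one_iff 𝕜]
  have hscaled : (fun x => (c x)⁻¹ • (c x • w x)) =o[l] fun x => (c x)⁻¹ * c x :=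
    (isBigO_refl (fun x => (c x)⁻¹) l).smul_isLittleO h
  refine hscaled.congr' ?_ ?_
  · filter_upwards [hc] with x hx using inv_smul_smul₀ hx (w x)
  · filter_upwards [hc] with x hx using inv_mul_cancel₀ hx

theorem ContinuousLinearMap.apply_add_smul_apply_of_comp_eq_one {𝕜 X : Type*}
    [NontriviallyNormedField 𝕜] [NormedAddCommGroup X] [NormedSpace 𝕜 X] {A S : X →L[𝕜] X} {γ : 𝕜}
    (h : (A + γ • (1 : X →L[𝕜] X)).comp S = 1) (x : X) :
    A (S x) + γ • S x = x := by
  simpa using congrArg (fun T : X →L[𝕜] X => T x) h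

theorem lavrentiev_saturation_exact_data_seq_general
    {X : Type*} [NormedAddCommGroup X] [NormedSpace ℝ X]
    (A : X →L[ℝ] X) (R : ℝ → X →L[ℝ] X)
    (hinv : ∀ γ : ℝ, 0 < γ →
      (A + γ • (1 : X →L[ℝ] X)).comp (R γ) = 1 ∧
      (R γ).comp (A + γ • (1 : X →L[ℝ] X)) = 1)
    (u : X) (γseq : ℕ → ℝ) (hpos : ∀ n, 0 < γseq n)
    (hto0 : Tendsto γseq atTop (𝓝 0))
    (hrate : (fun n : ℕ => γseq n • R (γseq n) u) =o[atTop] (fun n : ℕ => γseq n)) :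
    u = 0 := by
  have hw : Tendsto (fun n => R (γseq n) u) atTop (𝓝 0) :=
    hrate.tendsto_zero_of_smul (.of_forall fun n => (hpos n).ne')
  have hsum : Tendsto (fun n => A (R (γseq n) u) + γseq n • R (γseq n) u) atTop (𝓝 (A 0 + 0)) :=
    ((A.continuous.tendsto 0).comp hw).add (hrate.trans_tendsto hto0)
  have hu : Tendsto (fun _ : ℕ => u) atTop (𝓝 0) := by
    simpa only [ContinuousLinearMap.apply_add_smul_apply_of_comp_eq_one (hinv _ (hpos _)).1,
      map_zero, add_zero] using hsum
  exact tendsto_nhds_unique tendsto_const_nhds hu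

/-- sequential saturation for exact data. If `A` is a nonnegative bounded
linear operator on a reflexive Banach space `X` and along some sequence `γₙ → 0` of
positive numbers one has `‖γₙ (A + γₙ I)⁻¹ u‖ = o(γₙ)`, then `u = 0`. -/
theorem lavrentiev_saturation_exact_data_seq
    {X : Type*} [NormedAddCommGroup X] [NormedSpace ℝ X] [CompleteSpace X]
    (hrefl : Function.Surjective (NormedSpace.inclusionInDoubleDual ℝ X))
    (A : X →L[ℝ] X) (M : ℝ) (hM : 1 ≤ M) (R : ℝ → X →L[ℝ] X)
    (hinv : ∀ γ : ℝ, 0 < γ →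
      (A + γ • (1 : X →L[ℝ] X)).comp (R γ) = 1 ∧
      (R γ).comp (A + γ • (1 : X →L[ℝ] X)) = 1)
    (hnorm : ∀ γ : ℝ, 0 < γ → ‖R γ‖ ≤ M / γ)
    (u : X) (γseq : ℕ → ℝ) (hpos : ∀ n, 0 < γseq n)
    (hto0 : Tendsto γseq atTop (𝓝 0))
    (hrate : (fun n : ℕ => γseq n • R (γseq n) u) =o[atTop] (fun n : ℕ => γseq n)) :
    u = 0 :=
  lavrentiev_saturation_exact_data_seq_general A R hinv u γseq hpos hto0 hrate
end

section
/- Let A be a nonnegative bounded linear operator on a reflexive Banach space X, and let u ∈ X with u not in the range of A. Then ‖(A + γI)⁻¹ u‖ → ∞ as γ → 0 from the right. -/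
open Filter
open scoped Topology

/-!
If `‖(A + γ I)⁻¹ u‖` stayed bounded along some `γ → 0⁺`, then
`A (A + γ I)⁻¹ u = u - γ (A + γ I)⁻¹ u` would converge to `u` along it. By Banach–Alaoglu in the
bidual and reflexivity, the bounded family `(A + γ I)⁻¹ u` has a weak cluster point `x ∈ X`, and
since `A` is weakly continuous, `A x = u`.
-/

section WeakClusterPoint

variable {ι 𝕜 X : Type*}

theorem exists_forall_dual_tendsto_of_eventually_norm_le [NontriviallyNormedField 𝕜]
    [ProperSpace 𝕜] [SeminormedAddCommGroup X] [NormedSpace 𝕜 X]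
    (hrefl : Function.Surjective (NormedSpace.inclusionInDoubleDual 𝕜 X))
    {l : Filter ι} [l.NeBot] {v : ι → X} {C : ℝ} (hv : ∀ᶠ i in l, ‖v i‖ ≤ C) :
    ∃ x : X, ∃ F ≤ l, F.NeBot ∧
      ∀ f : StrongDual 𝕜 X, Tendsto (fun i => f (v i)) F (𝓝 (f x)) := by
  set g : ι → WeakDual 𝕜 (StrongDual 𝕜 X) :=
    fun i => StrongDual.toWeakDual (NormedSpace.inclusionInDoubleDual 𝕜 X (v i))
  have hgl : map g l ≤ 𝓟 (WeakDual.toStrongDual ⁻¹' Metric.closedBall 0 C) := by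
    rw [le_principal_iff, mem_map]
    filter_upwards [hv] with i hi
    simp only [Set.mem_preimage, Metric.mem_closedBall]
    exact (dist_zero_right (NormedSpace.inclusionInDoubleDual 𝕜 X (v i))).trans_le
      ((NormedSpace.double_dual_bound 𝕜 X (v i)).trans hi)
  obtain ⟨φ, -, hφ⟩ := (WeakDual.isCompact_closedBall 0 C).exists_clusterPt hgl
  obtain ⟨x, hx⟩ := hrefl (WeakDual.toStrongDual φ)
  have hF : (l ⊓ comap g (𝓝 φ)).NeBot :=
    neBot_inf_comap_iff_map.2 (by rw [inf_comm]; exact hφ)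
  refine ⟨x, l ⊓ comap g (𝓝 φ), inf_le_left, hF, fun f => ?_⟩
  have hg : Tendsto g (l ⊓ comap g (𝓝 φ)) (𝓝 φ) := tendsto_comap.mono_left inf_le_right
  have hφx : topDualPairing 𝕜 _ φ f = f x := by
    rw [← NormedSpace.dual_def 𝕜 X x f, hx]
    rfl
  rw [← hφx]
  exact tendsto_iff_forall_eval_tendsto_topDualPairing.1 hg f

theorem eq_of_forall_dual_tendsto_of_tendsto_apply [Field 𝕜] [TopologicalSpace 𝕜]
    [T2Space 𝕜] {Y : Type*} [AddCommGroup X] [TopologicalSpace X] [Module 𝕜 X]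
    [AddCommGroup Y] [TopologicalSpace Y] [Module 𝕜 Y] [SeparatingDual 𝕜 Y]
    (A : X →L[𝕜] Y) {F : Filter ι} [F.NeBot] {v : ι → X} {x : X} {y : Y}
    (hweak : ∀ f : StrongDual 𝕜 X, Tendsto (fun i => f (v i)) F (𝓝 (f x)))
    (hA : Tendsto (fun i => A (v i)) F (𝓝 y)) : A x = y :=
  (SeparatingDual.eq_iff_forall_dual_eq (R := 𝕜)).2 fun f =>
    tendsto_nhds_unique (hweak (f.comp A)) ((f.continuous.tendsto y).comp hA)

end WeakClusterPoint

theorem tendsto_apply_of_comp_add_smul_eq_one {𝕜 E : Type*} [NormedField 𝕜]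
    [SeminormedAddCommGroup E] [NormedSpace 𝕜 E] (A : E →L[𝕜] E)
    {R : 𝕜 → E →L[𝕜] E} {l : Filter 𝕜} (hl : Tendsto id l (𝓝 0))
    (hinv : ∀ᶠ γ in l, (A + γ • (1 : E →L[𝕜] E)).comp (R γ) = 1) {u : E} {C : ℝ}
    (hbound : ∀ᶠ γ in l, ‖R γ u‖ ≤ C) :
    Tendsto (fun γ => A (R γ u)) l (𝓝 u) := by
  have hsmul : Tendsto (fun γ => γ • R γ u) l (𝓝 0) :=
    hl.zero_smul_isBoundedUnder_le ⟨C, eventually_map.2 hbound⟩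
  have heq : (fun γ => u - γ • R γ u) =ᶠ[l] fun γ => A (R γ u) := by
    filter_upwards [hinv] with γ hγ
    have hu : A (R γ u) + γ • R γ u = u := by simpa using congr($hγ u)
    exact (eq_sub_of_add_eq hu).symm
  simpa using (tendsto_const_nhds.sub hsmul).congr' heq

theorem lavrentiev_resolvent_blowup_general
    {X : Type*} [NormedAddCommGroup X] [NormedSpace ℝ X]
    (hrefl : Function.Surjective (NormedSpace.inclusionInDoubleDual ℝ X))
    (A : X →L[ℝ] X) (R : ℝ → X →L[ℝ] X)
    (hinv : ∀ γ : ℝ, 0 < γ →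
      (A + γ • (1 : X →L[ℝ] X)).comp (R γ) = 1 ∧
      (R γ).comp (A + γ • (1 : X →L[ℝ] X)) = 1)
    (u : X) (hu : u ∉ Set.range A) :
    Tendsto (fun γ : ℝ => ‖R γ u‖) (𝓝[>] (0 : ℝ)) atTop := by
  by_contra hblow
  obtain ⟨C, hC⟩ : ∃ C : ℝ, ∃ᶠ γ in 𝓝[>] (0 : ℝ), ‖R γ u‖ < C := by
    simpa [tendsto_atTop, not_eventually] using hblow
  set l := 𝓝[>] (0 : ℝ) ⊓ 𝓟 {γ | ‖R γ u‖ < C}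
  have : l.NeBot := frequently_iff_neBot.1 hC
  have hbound : ∀ᶠ γ in l, ‖R γ u‖ ≤ C :=
    Eventually.mono (mem_inf_of_right (mem_principal_self _)) fun _ => le_of_lt
  obtain ⟨x, F, hFl, hF, hweak⟩ :=
    exists_forall_dual_tendsto_of_eventually_norm_le hrefl hbound
  have hFzero : F ≤ 𝓝[>] (0 : ℝ) := hFl.trans inf_le_left
  have hAu : Tendsto (fun γ => A (R γ u)) F (𝓝 u) :=
    tendsto_apply_of_comp_add_smul_eq_one A
      (tendsto_id.mono_left (hFzero.trans nhdsWithin_le_nhds))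
      (hFzero (eventually_mem_nhdsWithin.mono fun γ hγ => (hinv γ hγ).1)) (hFl hbound)
  exact hu ⟨x, eq_of_forall_dual_tendsto_of_tendsto_apply A hweak hAu⟩

/-- if `A` is a nonnegative bounded linear operator on a reflexive Banach
space `X` and `u ∉ R(A)`, then `‖(A + γ I)⁻¹ u‖ → ∞` as `γ → 0⁺`. -/
theorem lavrentiev_resolvent_blowup
    {X : Type*} [NormedAddCommGroup X] [NormedSpace ℝ X] [CompleteSpace X]
    (hrefl : Function.Surjective (NormedSpace.inclusionInDoubleDual ℝ X))
    (A : X →L[ℝ] X) (M : ℝ) (hM : 1 ≤ M) (R : ℝ → X →L[ℝ] X)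
    (hinv : ∀ γ : ℝ, 0 < γ →
      (A + γ • (1 : X →L[ℝ] X)).comp (R γ) = 1 ∧
      (R γ).comp (A + γ • (1 : X →L[ℝ] X)) = 1)
    (hnorm : ∀ γ : ℝ, 0 < γ → ‖R γ‖ ≤ M / γ)
    (u : X) (hu : u ∉ Set.range A) :
    Tendsto (fun γ : ℝ => ‖R γ u‖) (𝓝[>] (0 : ℝ)) atTop :=
  lavrentiev_resolvent_blowup_general hrefl A R hinv u hu
end

section
/- Let A be an accretive bounded linear operator on a Hilbert space H with R(A) ≠ H, let u ∈ H and δ > 0. Define Q_δ(u) = inf over γ > 0 of sup over Δ ∈ H with ‖Δ‖ ≤ δ of ‖-γ(A + γI)⁻¹u + (A + γI)⁻¹Δ‖, and for 1 ≤ p < ∞ define R_{δ,p}(u) = inf over γ > 0 of (‖γ(A + γI)⁻¹u‖^p + (δ/γ)^p)^{1/p}. Then R_{δ,2}(u) ≤ Q_δ(u) ≤ R_{δ,1}(u). -/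
/-!
Accretivity gives `γ‖v‖ ≤ ‖(A + γ)v‖`, so the resolvent `R γ = (A + γ)⁻¹` has norm at most `γ⁻¹`.
The bound is attained: a bounded-below operator has closed range, and a vector orthogonal to the
range of an accretive operator lies in its kernel, so a non-surjective accretive `A` has
approximate kernel vectors `w`, on which `γ R γ w ≈ w`. Hence `‖R γ‖ = γ⁻¹`.
For fixed `γ`, the worst-case error `sup_{‖Δ‖ ≤ δ} ‖-v + R γ Δ‖`, with `v = γ R γ u`, is at most
`‖v‖ + δ‖R γ‖` by the triangle inequality, and at least `√(‖v‖² + δ²‖R γ‖²)` by the parallelogram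
law applied to the pair of noises `±Δ`. Taking the infimum over `γ` gives both inequalities.
-/

open RCLike

section LeftInverse

variable {𝕜 E : Type*} [RCLike 𝕜] [NormedAddCommGroup E] [NormedSpace 𝕜 E]

theorem inv_le_opNorm_of_comp_add_smul_eq_one {A L : E →L[𝕜] E}
    (hA : ∀ ε > 0, ∃ w, ‖A w‖ < ε * ‖w‖) {γ : ℝ} (hγ : 0 < γ)
    (hL : L.comp (A + (γ : 𝕜) • (1 : E →L[𝕜] E)) = 1) : γ⁻¹ ≤ ‖L‖ := by
  have key : ∀ ε > 0, 1 ≤ ‖L‖ * (ε + γ) := by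
    intro ε hε
    obtain ⟨w, hw⟩ := hA ε hε
    have hw0 : 0 < ‖w‖ := pos_of_mul_pos_right ((norm_nonneg _).trans_lt hw) hε.le
    have hLw : L (A w + (γ : 𝕜) • w) = w := by simpa using DFunLike.congr_fun hL w
    refine le_of_mul_le_mul_right ?_ hw0
    calc 1 * ‖w‖ = ‖L (A w + (γ : 𝕜) • w)‖ := by rw [hLw, one_mul]
      _ ≤ ‖L‖ * (‖A w‖ + γ * ‖w‖) := by
          refine (L.le_opNorm _).trans (mul_le_mul_of_nonneg_left ?_ (norm_nonneg _))
          refine (norm_add_le _ _).trans_eq ?_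
          rw [norm_smul, norm_ofReal, abs_of_pos hγ]
      _ ≤ ‖L‖ * ((ε + γ) * ‖w‖) := by gcongr; linarith
      _ = ‖L‖ * (ε + γ) * ‖w‖ := by ring
  rw [inv_le_iff_one_le_mul₀' hγ]
  refine le_of_forall_pos_le_add fun η hη => ?_
  have hL0 : 0 < ‖L‖ + 1 := by positivity
  calc 1 ≤ ‖L‖ * (η / (‖L‖ + 1) + γ) := key _ (by positivity)
    _ = γ * ‖L‖ + η * (‖L‖ / (‖L‖ + 1)) := by ring
    _ ≤ γ * ‖L‖ + η := by
        gcongr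
        exact mul_le_of_le_one_right hη.le ((div_le_one hL0).2 (by linarith))

end LeftInverse

section Accretive

variable {𝕜 H : Type*} [RCLike 𝕜] [NormedAddCommGroup H] [InnerProductSpace 𝕜 H]

namespace ContinuousLinearMap

def IsAccretive (A : H →L[𝕜] H) : Prop := ∀ v : H, 0 ≤ re (inner 𝕜 (A v) v)

namespace IsAccretive

variable {A : H →L[𝕜] H}

theorem mul_norm_le_norm_add_smul (hA : IsAccretive A) (γ : ℝ) (v : H) :
    γ * ‖v‖ ≤ ‖A v + (γ : 𝕜) • v‖ := by
  have key : γ * ‖v‖ * ‖v‖ ≤ ‖A v + (γ : 𝕜) • v‖ * ‖v‖ :=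
    calc γ * ‖v‖ * ‖v‖ ≤ re (inner 𝕜 (A v) v) + γ * (‖v‖ * ‖v‖) := by
          nlinarith [hA v]
      _ = re (inner 𝕜 (A v + (γ : 𝕜) • v) v) := by
          rw [inner_add_left, inner_smul_left, map_add, conj_ofReal, re_ofReal_mul,
            inner_self_eq_norm_mul_norm]
      _ ≤ ‖A v + (γ : 𝕜) • v‖ * ‖v‖ := re_inner_le_norm _ _
  rcases (norm_nonneg v).eq_or_lt with hv | hv
  · rw [← hv, mul_zero]; exact norm_nonneg _
  · exact le_of_mul_le_mul_right key hv

theorem opNorm_le_inv_of_add_smul_comp_eq_one (hA : IsAccretive A) {γ : ℝ} (hγ : 0 < γ)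
    {R : H →L[𝕜] H} (hR : (A + (γ : 𝕜) • (1 : H →L[𝕜] H)).comp R = 1) : ‖R‖ ≤ γ⁻¹ := by
  refine R.opNorm_le_bound (inv_nonneg.2 hγ.le) fun x => ?_
  rw [inv_mul_eq_div, le_div_iff₀' hγ]
  have hx : A (R x) + (γ : 𝕜) • R x = x := by simpa using DFunLike.congr_fun hR x
  simpa [hx] using hA.mul_norm_le_norm_add_smul γ (R x)

theorem apply_eq_zero_of_forall_inner_apply_eq_zero (hA : IsAccretive A) {w : H}
    (hw : ∀ x, inner 𝕜 (A x) w = 0) : A w = 0 := by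
  -- `t ↦ Re ⟪A (w + t • A w), w + t • A w⟫` is a nonnegative quadratic with linear coefficient
  -- `‖A w‖ ^ 2` and no constant term, so its discriminant `‖A w‖ ^ 4` must vanish.
  have hquad : ∀ t : ℝ, 0 ≤ re (inner 𝕜 (A (A w)) (A w)) * (t * t) + ‖A w‖ ^ 2 * t + 0 := by
    intro t
    have := hA (w + (t : 𝕜) • A w)
    simp only [map_add, map_smul, inner_add_left, inner_add_right, inner_smul_left,
      inner_smul_right, hw, conj_ofReal, mul_zero, zero_add, mul_add, map_add,
      ← mul_assoc, ← ofReal_mul, re_ofReal_mul, inner_self_eq_norm_sq_to_K, ← ofReal_pow,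
      ofReal_re] at this
    linarith
  have := discrim_le_zero hquad
  rw [discrim] at this
  simpa using this

theorem exists_norm_apply_lt_mul_norm [CompleteSpace H] (hA : IsAccretive A)
    (hrange : Set.range A ≠ Set.univ) {ε : ℝ} (hε : 0 < ε) : ∃ w, ‖A w‖ < ε * ‖w‖ := by
  by_contra! hbdd
  have hclosed : IsClosed (Set.range A) :=
    (A.antilipschitz_of_bound (K := ⟨ε⁻¹, inv_nonneg.2 hε.le⟩) fun x => by
      change ‖x‖ ≤ ε⁻¹ * ‖A x‖
      rw [inv_mul_eq_div, le_div_iff₀' hε]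
      exact hbdd x).isClosed_range A.uniformContinuous
  have : CompleteSpace (LinearMap.range (A : H →ₗ[𝕜] H)) :=
    (LinearMap.coe_range (A : H →ₗ[𝕜] H) ▸ hclosed).completeSpace_coe
  have hne : (LinearMap.range (A : H →ₗ[𝕜] H))ᗮ ≠ ⊥ := by
    rw [Ne, Submodule.orthogonal_eq_bot_iff, LinearMap.range_eq_top]
    exact fun h => hrange (Set.range_eq_univ.2 h)
  obtain ⟨w, hw, hw0⟩ := Submodule.ne_bot_iff _ |>.1 hne
  have hAw : A w = 0 := hA.apply_eq_zero_of_forall_inner_apply_eq_zero fun x =>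
    (Submodule.mem_orthogonal _ w).1 hw _ (LinearMap.mem_range_self _ x)
  have := hbdd w
  rw [hAw, norm_zero] at this
  exact hw0 (norm_le_zero_iff.1 (nonpos_of_mul_nonpos_right this hε))

theorem opNorm_resolvent_eq_inv [CompleteSpace H] (hA : IsAccretive A)
    (hrange : Set.range A ≠ Set.univ) {γ : ℝ} (hγ : 0 < γ) {R : H →L[𝕜] H}
    (hright : (A + (γ : 𝕜) • (1 : H →L[𝕜] H)).comp R = 1)
    (hleft : R.comp (A + (γ : 𝕜) • (1 : H →L[𝕜] H)) = 1) : ‖R‖ = γ⁻¹ :=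
  le_antisymm (hA.opNorm_le_inv_of_add_smul_comp_eq_one hγ hright)
    (inv_le_opNorm_of_comp_add_smul_eq_one
      (fun _ hε => hA.exists_norm_apply_lt_mul_norm hrange hε) hγ hleft)

end IsAccretive
end ContinuousLinearMap
end Accretive

section WorstCaseError

variable {𝕜 E F : Type*} [RCLike 𝕜] [NormedAddCommGroup E] [NormedSpace 𝕜 E]
  [NormedAddCommGroup F]

noncomputable def worstCaseError [NormedSpace 𝕜 F] (L : E →L[𝕜] F) (v : F) (δ : ℝ) : ℝ :=
  ⨆ Δ : {Δ : E // ‖Δ‖ ≤ δ}, ‖-v + L Δ.1‖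

section Normed

variable [NormedSpace 𝕜 F] (L : E →L[𝕜] F) (v : F) {δ : ℝ}

theorem norm_neg_add_apply_le {Δ : E} (hΔ : ‖Δ‖ ≤ δ) : ‖-v + L Δ‖ ≤ ‖v‖ + δ * ‖L‖ :=
  calc ‖-v + L Δ‖ ≤ ‖-v‖ + ‖L Δ‖ := norm_add_le _ _
    _ ≤ ‖v‖ + δ * ‖L‖ := by
        rw [norm_neg, mul_comm]; gcongr; exact L.le_of_opNorm_le_of_le le_rfl hΔ

theorem worstCaseError_nonneg : 0 ≤ worstCaseError L v δ :=
  Real.iSup_nonneg fun _ => norm_nonneg _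

theorem worstCaseError_le (hδ : 0 ≤ δ) : worstCaseError L v δ ≤ ‖v‖ + δ * ‖L‖ :=
  have : Nonempty {Δ : E // ‖Δ‖ ≤ δ} := ⟨⟨0, by simpa⟩⟩
  ciSup_le fun Δ => norm_neg_add_apply_le L v Δ.2

theorem norm_neg_add_apply_le_worstCaseError {Δ : E} (hΔ : ‖Δ‖ ≤ δ) :
    ‖-v + L Δ‖ ≤ worstCaseError L v δ :=
  le_ciSup (f := fun Δ : {Δ : E // ‖Δ‖ ≤ δ} => ‖-v + L Δ.1‖)
    ⟨‖v‖ + δ * ‖L‖, by rintro _ ⟨Δ, rfl⟩; exact norm_neg_add_apply_le L v Δ.2⟩ ⟨Δ, hΔ⟩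

end Normed

variable [InnerProductSpace 𝕜 F] (L : E →L[𝕜] F) (v : F) {δ : ℝ}

theorem norm_sq_add_norm_apply_sq_le_worstCaseError_sq {Δ : E} (hΔ : ‖Δ‖ ≤ δ) :
    ‖v‖ ^ 2 + ‖L Δ‖ ^ 2 ≤ worstCaseError L v δ ^ 2 := by
  have hS := worstCaseError_nonneg L v (δ := δ)
  have hplus := norm_neg_add_apply_le_worstCaseError L v hΔ
  have hminus := norm_neg_add_apply_le_worstCaseError L v (δ := δ) (Δ := -Δ) (by rwa [norm_neg])
  rw [map_neg, ← sub_eq_add_neg] at hminus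
  have := parallelogram_law_with_norm 𝕜 (-v) (L Δ)
  rw [norm_neg] at this
  nlinarith [pow_le_pow_left₀ (norm_nonneg _) hplus 2, pow_le_pow_left₀ (norm_nonneg _) hminus 2]

theorem sqrt_le_worstCaseError (hδ : 0 < δ) :
    √(‖v‖ ^ 2 + (δ * ‖L‖) ^ 2) ≤ worstCaseError L v δ := by
  set S := worstCaseError L v δ
  have hv : 0 ≤ S ^ 2 - ‖v‖ ^ 2 := by
    simpa using
      norm_sq_add_norm_apply_sq_le_worstCaseError_sq L v (Δ := 0) (by simpa using hδ.le)
  have hL : δ * ‖L‖ ≤ √(S ^ 2 - ‖v‖ ^ 2) := by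
    rw [← le_div_iff₀' hδ]
    refine L.opNorm_le_of_unit_norm (by positivity) fun x hx => ?_
    rw [le_div_iff₀' hδ, Real.le_sqrt (by positivity) hv]
    have := norm_sq_add_norm_apply_sq_le_worstCaseError_sq L v (Δ := (δ : 𝕜) • x)
      (by rw [norm_smul, norm_ofReal, abs_of_pos hδ, hx, mul_one])
    rw [map_smul, norm_smul, norm_ofReal, abs_of_pos hδ] at this
    linarith
  rw [Real.sqrt_le_left (worstCaseError_nonneg L v)]
  nlinarith [pow_le_pow_left₀ (by positivity) hL 2, Real.sq_sqrt hv]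

end WorstCaseError

/-- for an accretive bounded linear operator `A` on a Hilbert space `H`
with `R(A) ≠ H`, and resolvent family `R γ = (A + γ I)⁻¹`, the quantity
`Q_δ(u) = inf_{γ>0} sup_{‖Δ‖≤δ} ‖-γ(A+γI)⁻¹u + (A+γI)⁻¹Δ‖` satisfies
`R_{δ,2}(u) ≤ Q_δ(u) ≤ R_{δ,1}(u)`, where
`R_{δ,p}(u) = inf_{γ>0} (‖γ(A+γI)⁻¹u‖^p + (δ/γ)^p)^{1/p}`. -/
theorem lavrentiev_Q_between_R2_R1
    {𝕜 : Type*} [RCLike 𝕜] {H : Type*} [NormedAddCommGroup H]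
    [InnerProductSpace 𝕜 H] [CompleteSpace H]
    (A : H →L[𝕜] H)
    (hacc : ∀ v : H, 0 ≤ RCLike.re (inner 𝕜 (A v) v : 𝕜))
    (hrange : Set.range A ≠ Set.univ)
    (R : ℝ → H →L[𝕜] H)
    (hinv : ∀ γ : ℝ, 0 < γ →
      (A + (γ : 𝕜) • (1 : H →L[𝕜] H)).comp (R γ) = 1 ∧
      (R γ).comp (A + (γ : 𝕜) • (1 : H →L[𝕜] H)) = 1)
    (u : H) (δ : ℝ) (hδ : 0 < δ) :
    (⨅ γ : {γ : ℝ // 0 < γ},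
        Real.sqrt (‖(γ.1 : 𝕜) • R γ.1 u‖ ^ 2 + (δ / γ.1) ^ 2))
      ≤ (⨅ γ : {γ : ℝ // 0 < γ}, ⨆ Δ : {Δ : H // ‖Δ‖ ≤ δ},
        ‖-((γ.1 : 𝕜) • R γ.1 u) + R γ.1 Δ.1‖) ∧
    (⨅ γ : {γ : ℝ // 0 < γ}, ⨆ Δ : {Δ : H // ‖Δ‖ ≤ δ},
        ‖-((γ.1 : 𝕜) • R γ.1 u) + R γ.1 Δ.1‖)
      ≤ (⨅ γ : {γ : ℝ // 0 < γ}, (‖(γ.1 : 𝕜) • R γ.1 u‖ + δ / γ.1)) := by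
  have hnorm (γ : {γ : ℝ // 0 < γ}) : δ * ‖R γ.1‖ = δ / γ.1 := by
    obtain ⟨hright, hleft⟩ := hinv γ.1 γ.2
    rw [ContinuousLinearMap.IsAccretive.opNorm_resolvent_eq_inv hacc hrange γ.2 hright hleft,
      div_eq_mul_inv]
  constructor
  · refine ciInf_mono ⟨0, ?_⟩ fun γ => ?_
    · rintro _ ⟨γ, rfl⟩
      exact Real.sqrt_nonneg _
    · simpa only [hnorm, worstCaseError] using
        sqrt_le_worstCaseError (R γ.1) ((γ.1 : 𝕜) • R γ.1 u) hδ
  · refine ciInf_mono ⟨0, ?_⟩ fun γ => ?_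
    · rintro _ ⟨γ, rfl⟩
      exact worstCaseError_nonneg _ _
    · simpa only [hnorm, worstCaseError] using
        worstCaseError_le (R γ.1) ((γ.1 : 𝕜) • R γ.1 u) hδ.le
end

section
/- Let A be an accretive bounded linear operator on a Hilbert space H with R(A) ≠ H. For parameters 0 < ε ≤ γ and any v ∈ H with ‖v‖ = 1 and ‖Av‖ = ε, one has ‖(A + γI)⁻¹ v‖ ≥ (1 - ε/γ) · (1/γ). -/
/-!
Accretivity gives `γ ‖u‖ ≤ ‖(A + γ I) u‖`, so the resolvent `R γ = (A + γ I)⁻¹` has norm at most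
`1 / γ`. Applying `R γ` to `(A + γ I) v = A v + γ v` gives `γ R γ v = v - R γ (A v)`, and the
correction term has norm at most `‖A v‖ / γ = ε / γ`, so `γ ‖R γ v‖ ≥ 1 - ε / γ`.
-/

section

open RCLike

variable {𝕜 H : Type*} [RCLike 𝕜] [NormedAddCommGroup H] [InnerProductSpace 𝕜 H]

def IsAccretive (A : H →L[𝕜] H) : Prop :=
  ∀ u : H, 0 ≤ re (inner 𝕜 (A u) u)

theorem IsAccretive.mul_norm_le_norm_add_smul {A : H →L[𝕜] H} (hA : IsAccretive A)
    (γ : ℝ) (u : H) : γ * ‖u‖ ≤ ‖A u + (γ : 𝕜) • u‖ := by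
  rcases eq_or_ne u 0 with rfl | hu
  · simp
  have hre : re (inner 𝕜 (A u + (γ : 𝕜) • u) u) = re (inner 𝕜 (A u) u) + γ * ‖u‖ ^ 2 := by
    rw [inner_add_left, inner_smul_left, map_add, conj_ofReal, re_ofReal_mul,
      inner_self_eq_norm_sq]
  have hsq : γ * ‖u‖ * ‖u‖ ≤ ‖A u + (γ : 𝕜) • u‖ * ‖u‖ :=
    calc γ * ‖u‖ * ‖u‖ ≤ re (inner 𝕜 (A u + (γ : 𝕜) • u) u) := by nlinarith [hA u]
      _ ≤ ‖A u + (γ : 𝕜) • u‖ * ‖u‖ := re_inner_le_norm _ _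
  exact le_of_mul_le_mul_right hsq (norm_pos_iff.mpr hu)

theorem IsAccretive.mul_norm_resolvent_le {A R : H →L[𝕜] H} (hA : IsAccretive A) {γ : ℝ}
    (hR : (A + (γ : 𝕜) • (1 : H →L[𝕜] H)).comp R = 1) (w : H) : γ * ‖R w‖ ≤ ‖w‖ := by
  have hw : A (R w) + (γ : 𝕜) • R w = w := by
    simpa using congrArg (fun T : H →L[𝕜] H => T w) hR
  simpa only [hw] using hA.mul_norm_le_norm_add_smul γ (R w)

theorem smul_resolvent_apply {A R : H →L[𝕜] H} {γ : ℝ}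
    (hR : R.comp (A + (γ : 𝕜) • (1 : H →L[𝕜] H)) = 1) (v : H) :
    (γ : 𝕜) • R v = v - R (A v) := by
  have hv : R (A v) + (γ : 𝕜) • R v = v := by
    simpa using congrArg (fun T : H →L[𝕜] H => T v) hR
  exact eq_sub_of_add_eq' hv

end

theorem accretive_resolvent_maximize_general
    {𝕜 : Type*} [RCLike 𝕜] {H : Type*} [NormedAddCommGroup H]
    [InnerProductSpace 𝕜 H]
    (A : H →L[𝕜] H)
    (hacc : ∀ v : H, 0 ≤ RCLike.re (inner 𝕜 (A v) v : 𝕜))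
    (R : ℝ → H →L[𝕜] H)
    (hinv : ∀ γ : ℝ, 0 < γ →
      (A + (γ : 𝕜) • (1 : H →L[𝕜] H)).comp (R γ) = 1 ∧
      (R γ).comp (A + (γ : 𝕜) • (1 : H →L[𝕜] H)) = 1)
    (ε γ : ℝ) (hε : 0 < ε) (hεγ : ε ≤ γ)
    (v : H) (hv : ‖v‖ = 1) (hAv : ‖A v‖ = ε) :
    (1 - ε / γ) * (1 / γ) ≤ ‖R γ v‖ := by
  have hγ : 0 < γ := hε.trans_le hεγ
  obtain ⟨hright, hleft⟩ := hinv γ hγ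
  have hcorr : γ * ‖R γ (A v)‖ ≤ ε := hAv ▸ IsAccretive.mul_norm_resolvent_le hacc hright (A v)
  have hmain : γ * ‖R γ v‖ = ‖v - R γ (A v)‖ := by
    rw [← smul_resolvent_apply hleft, norm_smul, RCLike.norm_ofReal, abs_of_pos hγ]
  have hlow : 1 - ‖R γ (A v)‖ ≤ γ * ‖R γ v‖ := hv ▸ hmain ▸ norm_sub_norm_le v (R γ (A v))
  rw [show (1 - ε / γ) * (1 / γ) = (γ - ε) / γ ^ 2 by field_simp, div_le_iff₀ (by positivity)]
  nlinarith

/-- let `A` be accretive on a Hilbert space `H` with `R(A) ≠ H`, and let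
`R γ = (A + γ I)⁻¹`. For `0 < ε ≤ γ` and `v ∈ H` with `‖v‖ = 1` and `‖A v‖ = ε`, one has
`‖(A + γ I)⁻¹ v‖ ≥ (1 - ε/γ) / γ`. -/
theorem accretive_resolvent_maximize
    {𝕜 : Type*} [RCLike 𝕜] {H : Type*} [NormedAddCommGroup H]
    [InnerProductSpace 𝕜 H] [CompleteSpace H]
    (A : H →L[𝕜] H)
    (hacc : ∀ v : H, 0 ≤ RCLike.re (inner 𝕜 (A v) v : 𝕜))
    (hrange : Set.range A ≠ Set.univ)
    (R : ℝ → H →L[𝕜] H)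
    (hinv : ∀ γ : ℝ, 0 < γ →
      (A + (γ : 𝕜) • (1 : H →L[𝕜] H)).comp (R γ) = 1 ∧
      (R γ).comp (A + (γ : 𝕜) • (1 : H →L[𝕜] H)) = 1)
    (ε γ : ℝ) (hε : 0 < ε) (hεγ : ε ≤ γ)
    (v : H) (hv : ‖v‖ = 1) (hAv : ‖A v‖ = ε) :
    (1 - ε / γ) * (1 / γ) ≤ ‖R γ v‖ :=
  accretive_resolvent_maximize_general A hacc R hinv ε γ hε hεγ v hv hAv
end

section
/- Let A be a nonnegative bounded linear operator on a Banach space X, and let u ∈ X lie in the closure of the range of A. Define P_δ(u) = sup over Δ ∈ X with ‖Δ‖ ≤ δ of the inf over γ > 0 of ‖-γ(A + γI)⁻¹u + (A + γI)⁻¹Δ‖. Then P_δ(u) → 0 as δ → 0 from the right. -/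
open Filter
open scoped Topology

/-!
Since `(A + γI)⁻¹(A + γI) = I`, we have `γ(A + γI)⁻¹Aw = γw - γ²(A + γI)⁻¹w → 0` as `γ → 0⁺`, and
the operators `γ(A + γI)⁻¹` are bounded by `M`, so this convergence extends from the range of `A`
to its closure. For every `γ > 0` the error is then at most `‖γ(A + γI)⁻¹u‖ + Mδ/γ`: first choose
`γ` making the first term small, then `δ` making the second one small.
-/

section UniformlyBounded

variable {ι 𝕜 E F : Type*} [NontriviallyNormedField 𝕜] [NormedAddCommGroup E] [NormedSpace 𝕜 E]
  [NormedAddCommGroup F] [NormedSpace 𝕜 F]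

theorem ContinuousLinearMap.tendsto_apply_zero_of_mem_closure_s13 {l : Filter ι} {T : ι → E →L[𝕜] F}
    {C : ℝ} (hT : ∀ᶠ i in l, ‖T i‖ ≤ C) {S : Set E}
    (hS : ∀ y ∈ S, Tendsto (fun i ↦ T i y) l (𝓝 0)) {x : E} (hx : x ∈ closure S) :
    Tendsto (fun i ↦ T i x) l (𝓝 0) := by
  -- restricted to the indices where the bound holds, the family is equicontinuous
  let T' : {i // ‖T i‖ ≤ C} → E →L[𝕜] F := fun i ↦ T i
  have hT' : Equicontinuous ((↑) ∘ T') := by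
    have hTFAE := (NormedSpace.equicontinuous_TFAE T').out 1 5
    exact hTFAE.2 ⟨C, fun i ↦ i.2⟩
  have hl : map (Subtype.val : {i // ‖T i‖ ≤ C} → ι) (comap Subtype.val l) = l :=
    map_comap_of_mem (by rw [Subtype.range_coe_subtype]; exact hT)
  rw [← hl, tendsto_map'_iff]
  exact (hT' x).tendsto_of_mem_closure (f := fun _ ↦ 0) tendsto_const_nhds
    (fun y hy ↦ (hS y hy).comp tendsto_comap) hx

end UniformlyBounded

theorem tendsto_nhdsGT_zero_of_le_add_mul {P f C : ℝ → ℝ} (hP : ∀ δ > 0, 0 ≤ P δ)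
    (hf : Tendsto f (𝓝[>] 0) (𝓝 0)) (hPf : ∀ γ > 0, ∀ δ > 0, P δ ≤ f γ + C γ * δ) :
    Tendsto P (𝓝[>] 0) (𝓝 0) := by
  rw [tendsto_order]
  refine ⟨fun a ha ↦ ?_, fun a ha ↦ ?_⟩
  · filter_upwards [self_mem_nhdsWithin] with δ hδ
    exact ha.trans_le (hP δ hδ)
  · obtain ⟨γ, hfγ, hγ⟩ := ((hf.eventually (gt_mem_nhds ha)).and self_mem_nhdsWithin).exists
    have hlim : Tendsto (fun δ ↦ f γ + C γ * δ) (𝓝[>] 0) (𝓝 (f γ)) := by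
      refine ((continuous_const.add (continuous_const.mul continuous_id)).tendsto' 0 _
        ?_).mono_left nhdsWithin_le_nhds
      simp
    filter_upwards [hlim.eventually (gt_mem_nhds hfγ), self_mem_nhdsWithin] with δ hδa hδ
    exact (hPf γ hγ δ hδ).trans_lt hδa

section Lavrentiev

variable {X : Type*} [NormedAddCommGroup X] [NormedSpace ℝ X]

/-- The maximal best possible error `P_δ(u)` of Lavrentiev regularization, `R γ` standing for
`(A + γI)⁻¹`. -/
noncomputable def lavrentievMaxBestError (R : ℝ → X →L[ℝ] X) (u : X) (δ : ℝ) : ℝ :=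
  ⨆ Δ : {Δ : X // ‖Δ‖ ≤ δ}, ⨅ γ : {γ : ℝ // 0 < γ}, ‖-(γ.1 • R γ.1 u) + R γ.1 Δ.1‖

theorem ContinuousLinearMap.norm_smul_le_of_le_div {T : X →L[ℝ] X} {γ M : ℝ} (hγ : 0 < γ)
    (hT : ‖T‖ ≤ M / γ) : ‖γ • T‖ ≤ M := by
  rw [norm_smul, Real.norm_of_nonneg hγ.le]
  exact (le_div_iff₀' hγ).1 hT

theorem ContinuousLinearMap.apply_apply_eq_sub_of_comp_add_smul_eq_one {T A : X →L[ℝ] X} {c : ℝ}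
    (h : T.comp (A + c • (1 : X →L[ℝ] X)) = 1) (w : X) : T (A w) = w - c • T w := by
  have hw := congrArg (fun S : X →L[ℝ] X ↦ S w) h
  simp only [ContinuousLinearMap.comp_apply, add_apply, smul_apply, one_apply_eq_self, map_add,
    map_smul] at hw
  exact eq_sub_of_add_eq hw

variable {A : X →L[ℝ] X} {M : ℝ} {R : ℝ → X →L[ℝ] X}

theorem tendsto_smul_resolvent_apply_map
    (hinv : ∀ γ : ℝ, 0 < γ → (R γ).comp (A + γ • (1 : X →L[ℝ] X)) = 1)
    (hnorm : ∀ γ : ℝ, 0 < γ → ‖R γ‖ ≤ M / γ) (w : X) :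
    Tendsto (fun γ : ℝ ↦ γ • R γ (A w)) (𝓝[>] 0) (𝓝 0) := by
  have hid : Tendsto (fun γ : ℝ ↦ γ) (𝓝[>] 0) (𝓝 0) := nhdsWithin_le_nhds
  have hbdd : IsBoundedUnder (· ≤ ·) (𝓝[>] 0) (fun γ : ℝ ↦ ‖γ • R γ w‖) := by
    refine isBoundedUnder_of_eventually_le (a := M * ‖w‖) ?_
    filter_upwards [self_mem_nhdsWithin] with γ (hγ : 0 < γ)
    exact ((γ • R γ).le_opNorm w).trans
      (by gcongr; exact (R γ).norm_smul_le_of_le_div hγ (hnorm γ hγ))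
  have hlim : Tendsto (fun γ : ℝ ↦ γ • w - γ • (γ • R γ w)) (𝓝[>] 0) (𝓝 0) := by
    simpa using (hid.smul_const w).sub (hid.zero_smul_isBoundedUnder_le hbdd)
  refine hlim.congr' ?_
  filter_upwards [self_mem_nhdsWithin] with γ (hγ : 0 < γ)
  rw [(R γ).apply_apply_eq_sub_of_comp_add_smul_eq_one (hinv γ hγ), smul_sub]

theorem tendsto_smul_resolvent_apply_of_mem_closure_range
    (hinv : ∀ γ : ℝ, 0 < γ → (R γ).comp (A + γ • (1 : X →L[ℝ] X)) = 1)
    (hnorm : ∀ γ : ℝ, 0 < γ → ‖R γ‖ ≤ M / γ) {u : X} (hu : u ∈ closure (Set.range A)) :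
    Tendsto (fun γ : ℝ ↦ γ • R γ u) (𝓝[>] 0) (𝓝 0) := by
  refine ContinuousLinearMap.tendsto_apply_zero_of_mem_closure_s13 (T := fun γ ↦ γ • R γ) (C := M) ?_ ?_ hu
  · filter_upwards [self_mem_nhdsWithin] with γ (hγ : 0 < γ)
    exact (R γ).norm_smul_le_of_le_div hγ (hnorm γ hγ)
  · rintro _ ⟨w, rfl⟩
    exact tendsto_smul_resolvent_apply_map hinv hnorm w

theorem lavrentievMaxBestError_le (hnorm : ∀ γ : ℝ, 0 < γ → ‖R γ‖ ≤ M / γ) (u : X) {γ δ : ℝ}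
    (hγ : 0 < γ) (hδ : 0 ≤ δ) :
    lavrentievMaxBestError R u δ ≤ ‖γ • R γ u‖ + M / γ * δ := by
  have hMγ : 0 ≤ M / γ := (norm_nonneg _).trans (hnorm γ hγ)
  refine Real.iSup_le (fun Δ ↦ ?_) (by positivity)
  have hbdd : BddBelow (Set.range fun γ : {γ : ℝ // 0 < γ} ↦ ‖-(γ.1 • R γ.1 u) + R γ.1 Δ.1‖) :=
    ⟨0, by rintro _ ⟨_, rfl⟩; exact norm_nonneg _⟩
  calc (⨅ γ : {γ : ℝ // 0 < γ}, ‖-(γ.1 • R γ.1 u) + R γ.1 Δ.1‖)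
      ≤ ‖-(γ • R γ u) + R γ Δ.1‖ := ciInf_le hbdd ⟨γ, hγ⟩
    _ ≤ ‖γ • R γ u‖ + ‖R γ‖ * ‖Δ.1‖ :=
        (norm_add_le _ _).trans (by rw [norm_neg]; gcongr; exact (R γ).le_opNorm _)
    _ ≤ ‖γ • R γ u‖ + M / γ * δ := by gcongr; exacts [hnorm γ hγ, Δ.2]

theorem lavrentievMaxBestError_nonneg (R : ℝ → X →L[ℝ] X) (u : X) (δ : ℝ) :
    0 ≤ lavrentievMaxBestError R u δ :=
  Real.iSup_nonneg fun _ ↦ Real.iInf_nonneg fun _ ↦ norm_nonneg _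

end Lavrentiev

theorem lavrentiev_P_tendsto_zero_general
    {X : Type*} [NormedAddCommGroup X] [NormedSpace ℝ X]
    (A : X →L[ℝ] X) (M : ℝ) (R : ℝ → X →L[ℝ] X)
    (hinv : ∀ γ : ℝ, 0 < γ →
      (A + γ • (1 : X →L[ℝ] X)).comp (R γ) = 1 ∧
      (R γ).comp (A + γ • (1 : X →L[ℝ] X)) = 1)
    (hnorm : ∀ γ : ℝ, 0 < γ → ‖R γ‖ ≤ M / γ)
    (u : X) (hu : u ∈ closure (Set.range A)) :
    Tendsto (fun δ : ℝ => ⨆ Δ : {Δ : X // ‖Δ‖ ≤ δ}, ⨅ γ : {γ : ℝ // 0 < γ},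
        ‖-(γ.1 • R γ.1 u) + R γ.1 Δ.1‖) (𝓝[>] (0 : ℝ)) (𝓝 0) := by
  have hres := tendsto_smul_resolvent_apply_of_mem_closure_range (fun γ hγ ↦ (hinv γ hγ).2) hnorm hu
  exact tendsto_nhdsGT_zero_of_le_add_mul (fun δ _ ↦ lavrentievMaxBestError_nonneg R u δ)
    (by simpa using hres.norm) (fun γ hγ δ hδ ↦ lavrentievMaxBestError_le hnorm u hγ hδ.le)

/-- for a nonnegative bounded linear operator `A` on a Banach space `X`
with resolvent family `R γ = (A + γ I)⁻¹` and `u` in the closure of `R(A)`, the maximal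
best possible error `P_δ(u) = sup_{‖Δ‖≤δ} inf_{γ>0} ‖-γ(A+γI)⁻¹u + (A+γI)⁻¹Δ‖`
tends to `0` as `δ → 0⁺`. -/
theorem lavrentiev_P_tendsto_zero
    {X : Type*} [NormedAddCommGroup X] [NormedSpace ℝ X] [CompleteSpace X]
    (A : X →L[ℝ] X) (M : ℝ) (hM : 1 ≤ M) (R : ℝ → X →L[ℝ] X)
    (hinv : ∀ γ : ℝ, 0 < γ →
      (A + γ • (1 : X →L[ℝ] X)).comp (R γ) = 1 ∧
      (R γ).comp (A + γ • (1 : X →L[ℝ] X)) = 1)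
    (hnorm : ∀ γ : ℝ, 0 < γ → ‖R γ‖ ≤ M / γ)
    (u : X) (hu : u ∈ closure (Set.range A)) :
    Tendsto (fun δ : ℝ => ⨆ Δ : {Δ : X // ‖Δ‖ ≤ δ}, ⨅ γ : {γ : ℝ // 0 < γ},
        ‖-(γ.1 • R γ.1 u) + R γ.1 Δ.1‖) (𝓝[>] (0 : ℝ)) (𝓝 0) :=
  lavrentiev_P_tendsto_zero_general A M R hinv hnorm u hu
end

section
/- Let A be a nonnegative bounded linear operator on a Banach space X, and let u ∈ X belong to the range of A. Define P_δ(u) = sup over Δ ∈ X with ‖Δ‖ ≤ δ of the inf over γ > 0 of ‖-γ(A + γI)⁻¹u + (A + γI)⁻¹Δ‖. Then P_δ(u) = O(δ^{1/2}) as δ → 0 from the right. -/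
open Filter Asymptotics
open scoped Topology

/-! For `u = A w` the bias term is `γ (A + γI)⁻¹ A w = γ (w - γ (A + γI)⁻¹ w)`, of norm at most
`(1 + M) ‖w‖ γ`, while the noise term is at most `M δ / γ`. The a-priori choice `γ = √δ`
balances the two and bounds every inner infimum, hence the supremum, by a multiple of `√δ`. -/

section Lavrentiev

variable {X : Type*} [NormedAddCommGroup X] [NormedSpace ℝ X] {A R : X →L[ℝ] X} {γ M : ℝ}

theorem resolvent_map_apply (hR : R.comp (A + γ • (1 : X →L[ℝ] X)) = 1) (w : X) :
    R (A w) = w - γ • R w := by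
  have h := congrArg (fun T : X →L[ℝ] X => T w) hR
  simp only [ContinuousLinearMap.comp_apply, add_apply, smul_apply,
    one_apply_eq_self, map_add, map_smul] at h
  exact eq_sub_of_add_eq h

theorem norm_smul_resolvent_map_le (hγ : 0 < γ)
    (hR : R.comp (A + γ • (1 : X →L[ℝ] X)) = 1) (hRn : ‖R‖ ≤ M / γ) (w : X) :
    ‖γ • R (A w)‖ ≤ γ * ((1 + M) * ‖w‖) := by
  have hRw : ‖γ • R w‖ ≤ M * ‖w‖ := by
    calc ‖γ • R w‖ ≤ γ * (M / γ * ‖w‖) := by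
          rw [norm_smul, Real.norm_of_nonneg hγ.le]
          gcongr
          exact R.le_of_opNorm_le hRn w
      _ = M * ‖w‖ := by field_simp
  rw [resolvent_map_apply hR, norm_smul, Real.norm_of_nonneg hγ.le]
  gcongr
  calc ‖w - γ • R w‖ ≤ ‖w‖ + ‖γ • R w‖ := norm_sub_le _ _
    _ ≤ (1 + M) * ‖w‖ := by linarith

theorem norm_lavrentiev_error_le_of_norm_le_sq (hγ : 0 < γ)
    (hR : R.comp (A + γ • (1 : X →L[ℝ] X)) = 1) (hRn : ‖R‖ ≤ M / γ) (w : X) {Δ : X}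
    (hΔ : ‖Δ‖ ≤ γ ^ 2) :
    ‖-(γ • R (A w)) + R Δ‖ ≤ ((1 + M) * ‖w‖ + M) * γ := by
  have hnoise : ‖R Δ‖ ≤ M * γ := by
    calc ‖R Δ‖ ≤ M / γ * ‖Δ‖ := R.le_of_opNorm_le hRn Δ
      _ ≤ M / γ * γ ^ 2 := by gcongr; exact (norm_nonneg R).trans hRn
      _ = M * γ := by field_simp
  calc ‖-(γ • R (A w)) + R Δ‖ ≤ ‖γ • R (A w)‖ + ‖R Δ‖ := by
        simpa only [norm_neg] using norm_add_le (-(γ • R (A w))) (R Δ)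
    _ ≤ γ * ((1 + M) * ‖w‖) + M * γ :=
        add_le_add (norm_smul_resolvent_map_le hγ hR hRn w) hnoise
    _ = ((1 + M) * ‖w‖ + M) * γ := by ring

end Lavrentiev

theorem Real.norm_iSup_iInf_le {ι κ : Sort*} {f : ι → κ → ℝ} {C : ℝ}
    (hf : ∀ i k, 0 ≤ f i k) (hC : 0 ≤ C) (h : ∀ i, ∃ k, f i k ≤ C) : ‖⨆ i, ⨅ k, f i k‖ ≤ C := by
  have hinf : ∀ i, ⨅ k, f i k ≤ C := fun i =>
    let ⟨k, hk⟩ := h i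
    (ciInf_le ⟨0, by rintro _ ⟨k, rfl⟩; exact hf i k⟩ k).trans hk
  rw [Real.norm_of_nonneg (Real.iSup_nonneg fun i => Real.iInf_nonneg (hf i))]
  exact Real.iSup_le hinf hC

theorem lavrentiev_P_rate_sqrt_general
    {X : Type*} [NormedAddCommGroup X] [NormedSpace ℝ X]
    (A : X →L[ℝ] X) (M : ℝ) (R : ℝ → X →L[ℝ] X)
    (hinv : ∀ γ : ℝ, 0 < γ →
      (A + γ • (1 : X →L[ℝ] X)).comp (R γ) = 1 ∧
      (R γ).comp (A + γ • (1 : X →L[ℝ] X)) = 1)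
    (hnorm : ∀ γ : ℝ, 0 < γ → ‖R γ‖ ≤ M / γ)
    (u : X) (hu : u ∈ Set.range A) :
    (fun δ : ℝ => ⨆ Δ : {Δ : X // ‖Δ‖ ≤ δ}, ⨅ γ : {γ : ℝ // 0 < γ},
        ‖-(γ.1 • R γ.1 u) + R γ.1 Δ.1‖)
      =O[𝓝[>] (0 : ℝ)] (fun δ : ℝ => δ ^ ((1 : ℝ) / 2)) := by
  obtain ⟨w, rfl⟩ := hu
  have hM_nonneg : 0 ≤ M := by simpa using (norm_nonneg _).trans (hnorm 1 one_pos)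
  refine IsBigO.of_bound ((1 + M) * ‖w‖ + M) ?_
  filter_upwards [self_mem_nhdsWithin] with δ (hδ : 0 < δ)
  have hsqrt : 0 < √δ := Real.sqrt_pos.2 hδ
  rw [← Real.sqrt_eq_rpow, Real.norm_of_nonneg hsqrt.le]
  refine Real.norm_iSup_iInf_le (fun _ _ => norm_nonneg _) (by positivity)
    fun Δ => ⟨⟨√δ, hsqrt⟩, ?_⟩
  exact norm_lavrentiev_error_le_of_norm_le_sq hsqrt (hinv _ hsqrt).2 (hnorm _ hsqrt) w
    (Δ.2.trans (Real.sq_sqrt hδ.le).ge)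

/-- for a nonnegative bounded linear operator `A` on a Banach space `X`
with resolvent family `R γ = (A + γ I)⁻¹` and `u ∈ R(A)`, the maximal best possible
error `P_δ(u) = sup_{‖Δ‖≤δ} inf_{γ>0} ‖-γ(A+γI)⁻¹u + (A+γI)⁻¹Δ‖` satisfies
`P_δ(u) = O(δ^{1/2})` as `δ → 0⁺`. -/
theorem lavrentiev_P_rate_sqrt
    {X : Type*} [NormedAddCommGroup X] [NormedSpace ℝ X] [CompleteSpace X]
    (A : X →L[ℝ] X) (M : ℝ) (hM : 1 ≤ M) (R : ℝ → X →L[ℝ] X)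
    (hinv : ∀ γ : ℝ, 0 < γ →
      (A + γ • (1 : X →L[ℝ] X)).comp (R γ) = 1 ∧
      (R γ).comp (A + γ • (1 : X →L[ℝ] X)) = 1)
    (hnorm : ∀ γ : ℝ, 0 < γ → ‖R γ‖ ≤ M / γ)
    (u : X) (hu : u ∈ Set.range A) :
    (fun δ : ℝ => ⨆ Δ : {Δ : X // ‖Δ‖ ≤ δ}, ⨅ γ : {γ : ℝ // 0 < γ},
        ‖-(γ.1 • R γ.1 u) + R γ.1 Δ.1‖)
      =O[𝓝[>] (0 : ℝ)] (fun δ : ℝ => δ ^ ((1 : ℝ) / 2)) :=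
  lavrentiev_P_rate_sqrt_general A M R hinv hnorm u hu
end

section
/- Let A be a nonnegative bounded linear operator on a reflexive Banach space X, and let u ∈ X. Define P_δ(u) = sup over Δ ∈ X with ‖Δ‖ ≤ δ of the inf over γ > 0 of ‖-γ(A + γI)⁻¹u + (A + γI)⁻¹Δ‖. If P_δ(u) → 0 as δ → 0 from the right, then u belongs to the closure of the range of A. -/
open Filter Asymptotics
open scoped Topology

/-!
Taking the noise `Δ = 0` shows `P_δ(u) ≥ inf_{γ>0} ‖γ (A + γI)⁻¹ u‖` for every `δ ≥ 0`, so this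
infimum vanishes when `P_δ(u) → 0`. Since `u - A (A + γI)⁻¹ u = γ (A + γI)⁻¹ u`, the points
`A (A + γI)⁻¹ u` of the range of `A` then come arbitrarily close to `u`.
-/

namespace Lavrentiev

variable {X : Type*} [NormedAddCommGroup X] [NormedSpace ℝ X]

/-- The best possible error `inf_{γ>0} ‖u_γ^δ - u‖` of Lavrentiev regularization for the noise
`Δ`, where `R γ` plays the role of `(A + γI)⁻¹`. -/
noncomputable def bestError (R : ℝ → X →L[ℝ] X) (u Δ : X) : ℝ :=
  ⨅ γ : {γ : ℝ // 0 < γ}, ‖-(γ.1 • R γ.1 u) + R γ.1 Δ‖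

/-- The maximal best possible error `P_δ(u)`. -/
noncomputable def maxBestError (R : ℝ → X →L[ℝ] X) (u : X) (δ : ℝ) : ℝ :=
  ⨆ Δ : {Δ : X // ‖Δ‖ ≤ δ}, bestError R u Δ.1

variable (R : ℝ → X →L[ℝ] X) (u : X)

theorem bestError_nonneg (Δ : X) : 0 ≤ bestError R u Δ :=
  Real.iInf_nonneg fun _ => norm_nonneg _

theorem bestError_le {γ : ℝ} (hγ : 0 < γ) (Δ : X) :
    bestError R u Δ ≤ ‖-(γ • R γ u) + R γ Δ‖ :=
  ciInf_le ⟨0, by rintro _ ⟨_, rfl⟩; exact norm_nonneg _⟩ (⟨γ, hγ⟩ : {γ : ℝ // 0 < γ})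

theorem bddAbove_bestError (δ : ℝ) :
    BddAbove (Set.range fun Δ : {Δ : X // ‖Δ‖ ≤ δ} => bestError R u Δ.1) := by
  refine ⟨‖R 1 u‖ + ‖R 1‖ * δ, ?_⟩
  rintro _ ⟨⟨Δ, hΔ⟩, rfl⟩
  calc bestError R u Δ ≤ ‖-((1 : ℝ) • R 1 u) + R 1 Δ‖ := bestError_le R u one_pos Δ
    _ ≤ ‖R 1 u‖ + ‖R 1 Δ‖ := by rw [one_smul, ← norm_neg (R 1 u)]; exact norm_add_le _ _
    _ ≤ ‖R 1 u‖ + ‖R 1‖ * δ := by gcongr; exact (R 1).le_of_opNorm_le_of_le le_rfl hΔ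

theorem bestError_zero_le_maxBestError {δ : ℝ} (hδ : 0 ≤ δ) :
    bestError R u 0 ≤ maxBestError R u δ :=
  le_ciSup (bddAbove_bestError R u δ) (⟨0, by simpa using hδ⟩ : {Δ : X // ‖Δ‖ ≤ δ})

theorem bestError_zero_eq_zero_of_tendsto
    (hP : Tendsto (maxBestError R u) (𝓝[>] 0) (𝓝 0)) : bestError R u 0 = 0 :=
  le_antisymm
    (ge_of_tendsto hP (eventually_nhdsWithin_of_forall fun _ hδ =>
      bestError_zero_le_maxBestError R u (le_of_lt hδ)))
    (bestError_nonneg R u 0)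

end Lavrentiev

theorem ContinuousLinearMap.sub_apply_eq_smul_of_add_smul_comp_eq_one
    {𝕜 E : Type*} [NontriviallyNormedField 𝕜] [NormedAddCommGroup E] [NormedSpace 𝕜 E]
    {A S : E →L[𝕜] E} {γ : 𝕜} (h : (A + γ • (1 : E →L[𝕜] E)).comp S = 1) (u : E) :
    u - A (S u) = γ • S u := by
  have hu : A (S u) + γ • S u = u := by simpa using congrArg (fun T : E →L[𝕜] E => T u) h
  nth_rw 1 [← hu]
  exact add_sub_cancel_left _ _

open Lavrentiev in
theorem mem_closure_range_of_bestError_zero_eq_zero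
    {X : Type*} [NormedAddCommGroup X] [NormedSpace ℝ X]
    {A : X →L[ℝ] X} {R : ℝ → X →L[ℝ] X}
    (hright : ∀ γ : ℝ, 0 < γ → (A + γ • (1 : X →L[ℝ] X)).comp (R γ) = 1)
    {u : X} (h0 : bestError R u 0 = 0) :
    u ∈ closure (Set.range A) := by
  refine Metric.mem_closure_iff.2 fun ε hε => ?_
  obtain ⟨⟨γ, hγ⟩, hlt⟩ := exists_lt_of_ciInf_lt (h0.trans_lt hε)
  refine ⟨A (R γ u), ⟨R γ u, rfl⟩, ?_⟩
  rw [dist_eq_norm, ContinuousLinearMap.sub_apply_eq_smul_of_add_smul_comp_eq_one (hright γ hγ)]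
  simpa using hlt

theorem lavrentiev_P_converse_closure_general
    {X : Type*} [NormedAddCommGroup X] [NormedSpace ℝ X]
    (A : X →L[ℝ] X) (R : ℝ → X →L[ℝ] X)
    (hinv : ∀ γ : ℝ, 0 < γ →
      (A + γ • (1 : X →L[ℝ] X)).comp (R γ) = 1 ∧
      (R γ).comp (A + γ • (1 : X →L[ℝ] X)) = 1)
    (u : X)
    (hP : Tendsto (fun δ : ℝ => ⨆ Δ : {Δ : X // ‖Δ‖ ≤ δ}, ⨅ γ : {γ : ℝ // 0 < γ},
        ‖-(γ.1 • R γ.1 u) + R γ.1 Δ.1‖) (𝓝[>] (0 : ℝ)) (𝓝 0)) :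
    u ∈ closure (Set.range A) :=
  mem_closure_range_of_bestError_zero_eq_zero (fun γ hγ => (hinv γ hγ).1)
    (Lavrentiev.bestError_zero_eq_zero_of_tendsto R u hP)

/-- converse result. For a nonnegative bounded linear operator `A` on a
reflexive Banach space `X` with resolvent family `R γ = (A + γ I)⁻¹`, if the maximal
best possible error `P_δ(u) = sup_{‖Δ‖≤δ} inf_{γ>0} ‖-γ(A+γI)⁻¹u + (A+γI)⁻¹Δ‖`
tends to `0` as `δ → 0⁺`, then `u` lies in the closure of `R(A)`. -/
theorem lavrentiev_P_converse_closure
    {X : Type*} [NormedAddCommGroup X] [NormedSpace ℝ X] [CompleteSpace X]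
    (hrefl : Function.Surjective (NormedSpace.inclusionInDoubleDual ℝ X))
    (A : X →L[ℝ] X) (M : ℝ) (hM : 1 ≤ M) (R : ℝ → X →L[ℝ] X)
    (hinv : ∀ γ : ℝ, 0 < γ →
      (A + γ • (1 : X →L[ℝ] X)).comp (R γ) = 1 ∧
      (R γ).comp (A + γ • (1 : X →L[ℝ] X)) = 1)
    (hnorm : ∀ γ : ℝ, 0 < γ → ‖R γ‖ ≤ M / γ)
    (u : X)
    (hP : Tendsto (fun δ : ℝ => ⨆ Δ : {Δ : X // ‖Δ‖ ≤ δ}, ⨅ γ : {γ : ℝ // 0 < γ},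
        ‖-(γ.1 • R γ.1 u) + R γ.1 Δ.1‖) (𝓝[>] (0 : ℝ)) (𝓝 0)) :
    u ∈ closure (Set.range A) :=
  lavrentiev_P_converse_closure_general A R hinv u hP
end
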